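/- Let |Ψ̃⟩ := |Φ̃⟩⊗|+⟩ where |Φ̃⟩ = (sqrt(8+3√7)/4)|00⟩ + (sqrt(8-3√7)/4)|11⟩ and |+⟩ = (|0⟩+|1⟩)/√2. Then ‖Q(|Ψ̃⟩⟨Ψ̃|)‖ = 10 + (5/4)·sqrt 22, where Q(M) := 24·tr_{1,2,3}[P₄(M⊗𝟙)]. Consequently the single-element estimation fidelity (1/20)·‖Q(|Ψ̃⟩⟨Ψ̃|)‖ equals 1/2 + √22/16. -/

import Mathlib

/-- The projector onto the symmetric subspace `Sym⁴(ℂ²)` of `(ℂ²)^{⊗4}`. -/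
noncomputable def P4 : Matrix (Fin 4 → Fin 2) (Fin 4 → Fin 2) ℂ :=
  fun v w => (1/24) * ∑ σ : Equiv.Perm (Fin 4), if (fun i => w (σ i)) = v then 1 else 0

/-- The first three tensor factors of an index of `(ℂ²)^{⊗4}`. -/
def front (v : Fin 4 → Fin 2) : Fin 3 → Fin 2 := fun i => v i.castSucc

/-- `M ⊗ 𝟙` for `M` an operator on `(ℂ²)^{⊗3}`. -/
noncomputable def tensId (M : Matrix (Fin 3 → Fin 2) (Fin 3 → Fin 2) ℂ) :
    Matrix (Fin 4 → Fin 2) (Fin 4 → Fin 2) ℂ :=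
  fun v w => M (front v) (front w) * (if v (Fin.last 3) = w (Fin.last 3) then 1 else 0)

/-- `Q(M) = 4!·tr_{1,2,3}[P₄ (M ⊗ 𝟙)]`. -/
noncomputable def Qmap (M : Matrix (Fin 3 → Fin 2) (Fin 3 → Fin 2) ℂ) :
    Matrix (Fin 2) (Fin 2) ℂ :=
  fun x y => 24 * ∑ u : Fin 3 → Fin 2, (P4 * tensId M) (Fin.snoc u x) (Fin.snoc u y)

/-- Coefficients of `|Φ̃⟩ = (√(8+3√7)/4)|00⟩ + (√(8-3√7)/4)|11⟩`. -/
noncomputable def Φt (i j : Fin 2) : ℂ :=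
  if i = 0 ∧ j = 0 then (Real.sqrt (8 + 3*Real.sqrt 7)/4 : ℝ)
  else if i = 1 ∧ j = 1 then (Real.sqrt (8 - 3*Real.sqrt 7)/4 : ℝ)
  else 0

/-- `|Ψ̃⟩ = |Φ̃⟩ ⊗ |+⟩`. -/
noncomputable def Ψt (v : Fin 3 → Fin 2) : ℂ :=
  Φt (v 0) (v 1) * ((1/Real.sqrt 2 : ℝ) : ℂ)

/-- `|Ψ̃⟩⟨Ψ̃|`. -/
noncomputable def outerΨt : Matrix (Fin 3 → Fin 2) (Fin 3 → Fin 2) ℂ :=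
  fun v w => Ψt v * (starRingEnd ℂ) (Ψt w)

/-!
`Q(|Ψ̃⟩⟨Ψ̃|)` is the real symmetric matrix `10 • 1 + B` with `B = [[d, q], [q, -d]]`,
`d = 15√7/8`, `q = 25/8`. Such a `B` squares to `s² • 1` with `s = √(d² + q²) = 5√22/4`, so the
C⋆-identity gives `‖B‖ = s` and hence `‖10 • 1 + B‖ ≤ 10 + s`. Conversely
`(10 • 1 + B) (B + s • 1) = (10 + s) (B + s • 1)` with `B + s • 1 ≠ 0`, which gives `≥`.
-/

open Finset Nat

section CStarAlgebra

variable {E : Type*} [CStarAlgebra E] [Nontrivial E] {B : E}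

theorem IsSelfAdjoint.norm_eq_of_mul_self_eq_smul_one (hB : IsSelfAdjoint B) {s : ℝ}
    (hs : 0 ≤ s) (hB2 : B * B = s ^ 2 • (1 : E)) : ‖B‖ = s := by
  have h : ‖B‖ ^ 2 = s ^ 2 := by
    rw [sq, ← CStarRing.norm_star_mul_self, hB.star_eq, hB2, norm_smul, norm_one, mul_one,
      Real.norm_of_nonneg (by positivity)]
  exact (pow_left_inj₀ (norm_nonneg B) hs two_ne_zero).mp h

theorem IsSelfAdjoint.norm_smul_one_add_eq (hB : IsSelfAdjoint B) {m s : ℝ} (hm : 0 ≤ m)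
    (hs : 0 ≤ s) (hB2 : B * B = s ^ 2 • (1 : E)) (hne : B + s • 1 ≠ 0) :
    ‖m • (1 : E) + B‖ = m + s := by
  refine le_antisymm ?_ ?_
  · calc ‖m • (1 : E) + B‖ ≤ ‖m • (1 : E)‖ + ‖B‖ := norm_add_le _ _
      _ = m + s := by
        rw [norm_smul, norm_one, mul_one, Real.norm_of_nonneg hm,
          hB.norm_eq_of_mul_self_eq_smul_one hs hB2]
  · have heig : (m • (1 : E) + B) * (B + s • 1) = (m + s) • (B + s • 1) := by
      rw [add_mul, mul_add, mul_add, hB2]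
      simp only [smul_mul_assoc, mul_smul_comm, one_mul, mul_one]
      module
    have hle := norm_mul_le (m • (1 : E) + B) (B + s • 1)
    rw [heig, norm_smul, Real.norm_of_nonneg (by positivity)] at hle
    exact le_of_mul_le_mul_right hle (norm_pos_iff.mpr hne)

end CStarAlgebra

open scoped Matrix.Norms.L2Operator

theorem Matrix.l2_opNorm_real_symm_fin_two {m d q : ℝ} (hm : 0 ≤ m) (hq : q ≠ 0) :
    ‖!![((m + d : ℝ) : ℂ), (q : ℂ); (q : ℂ), ((m - d : ℝ) : ℂ)]‖ = m + √(d ^ 2 + q ^ 2) := by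
  set s := √(d ^ 2 + q ^ 2)
  set B : Matrix (Fin 2) (Fin 2) ℂ := !![(d : ℂ), q; q, -d]
  have hs2 : s ^ 2 = d ^ 2 + q ^ 2 := Real.sq_sqrt (by positivity)
  have hB : IsSelfAdjoint B := by
    ext i j; fin_cases i <;> fin_cases j <;> simp [B, Matrix.star_apply]
  have hB2 : B * B = s ^ 2 • (1 : Matrix (Fin 2) (Fin 2) ℂ) := by
    ext i j; fin_cases i <;> fin_cases j <;> simp [B, hs2, Matrix.mul_apply] <;> ring
  have hne : B + s • 1 ≠ 0 := fun h => hq (by simpa [B] using congrFun (congrFun h 0) 1)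
  convert hB.norm_smul_one_add_eq hm (Real.sqrt_nonneg _) hB2 hne using 2
  ext i j; fin_cases i <;> fin_cases j <;> simp [B]; ring

def hammingWeight {n : ℕ} (v : Fin n → Fin 2) : ℕ := ∑ i, (v i : ℕ)

lemma hammingWeight_snoc {n : ℕ} (u : Fin n → Fin 2) (x : Fin 2) :
    hammingWeight (Fin.snoc u x : Fin (n + 1) → Fin 2) = hammingWeight u + x := by
  simp [hammingWeight, Fin.sum_univ_castSucc]

lemma hammingWeight_cons {n : ℕ} (x : Fin 2) (u : Fin n → Fin 2) :
    hammingWeight (Fin.cons x u : Fin (n + 1) → Fin 2) = x + hammingWeight u := by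
  simp [hammingWeight, Fin.sum_univ_succ]

/-- The stabiliser of a word of weight `k` is `S_k × S_{4-k}`. -/
lemma card_perm_comp_eq (v w : Fin 4 → Fin 2) :
    #{σ : Equiv.Perm (Fin 4) | (fun i => w (σ i)) = v} =
      if hammingWeight v = hammingWeight w then
        (hammingWeight v)! * (4 - hammingWeight v)! else 0 := by
  revert v w; decide

lemma Fintype.sum_fun_fin_succ {α M : Type*} [Fintype α] [AddCommMonoid M] {n : ℕ}
    (f : (Fin (n + 1) → α) → M) : ∑ v, f v = ∑ a, ∑ v : Fin n → α, f (Fin.cons a v) := by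
  rw [← (Fin.consEquiv fun _ => α).sum_comp, Fintype.sum_prod_type]; rfl

lemma Fintype.sum_fun_fin_snoc {α M : Type*} [Fintype α] [AddCommMonoid M] {n : ℕ}
    (f : (Fin (n + 1) → α) → M) : ∑ v, f v = ∑ a, ∑ v : Fin n → α, f (Fin.snoc v a) := by
  rw [← (Fin.snocEquiv fun _ => α).sum_comp, Fintype.sum_prod_type]; rfl

lemma front_snoc (u : Fin 3 → Fin 2) (x : Fin 2) : front (Fin.snoc u x) = u := by
  funext i; simp [front]

/-- `24 P₄` is the sum of the permutation matrices, so only words of equal weight couple. -/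
lemma Qmap_apply (M : Matrix (Fin 3 → Fin 2) (Fin 3 → Fin 2) ℂ) (x y : Fin 2) :
    Qmap M x y = ∑ u, ∑ w, (if hammingWeight u + x = hammingWeight w + y then
      ((hammingWeight u + x)! * (4 - (hammingWeight u + x))! : ℂ) else 0) * M w u := by
  rw [Qmap, Finset.mul_sum]
  refine Finset.sum_congr rfl fun u _ => ?_
  rw [Matrix.mul_apply, Fintype.sum_fun_fin_snoc, Fintype.sum_eq_single y, Finset.mul_sum]
  · refine Finset.sum_congr rfl fun w _ => ?_
    rw [tensId, P4, Finset.sum_boole, card_perm_comp_eq, front_snoc, front_snoc,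
      hammingWeight_snoc, hammingWeight_snoc, Fin.snoc_last, Fin.snoc_last, if_pos rfl]
    split_ifs <;> push_cast <;> ring
  · intro a ha
    simp only [tensId, Fin.snoc_last, if_neg ha, mul_zero, Finset.sum_const_zero]

/-- `(a|00⟩ + b|11⟩) ⊗ c(|0⟩ + |1⟩)`. -/
def diagTensorPlus (a b c : ℝ) (v : Fin 3 → Fin 2) : ℂ :=
  (if v 0 = 0 ∧ v 1 = 0 then (a : ℂ) else if v 0 = 1 ∧ v 1 = 1 then (b : ℂ) else 0) * c

lemma Qmap_vecMulVec_diagTensorPlus (a b c : ℝ) :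
    Qmap (Matrix.vecMulVec (diagTensorPlus a b c) (star (diagTensorPlus a b c))) =
      !![((c ^ 2 * (30 * a ^ 2 + 10 * b ^ 2) : ℝ) : ℂ),
          ((c ^ 2 * (6 * a ^ 2 + 4 * a * b + 6 * b ^ 2) : ℝ) : ℂ);
         ((c ^ 2 * (6 * a ^ 2 + 4 * a * b + 6 * b ^ 2) : ℝ) : ℂ),
          ((c ^ 2 * (10 * a ^ 2 + 30 * b ^ 2) : ℝ) : ℂ)] := by
  ext x y
  rw [Qmap_apply]
  simp only [Fintype.sum_fun_fin_succ, Fin.sum_univ_two, hammingWeight_cons, Fintype.sum_unique,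
    Matrix.vecMulVec_apply]
  fin_cases x <;> fin_cases y <;> simp [hammingWeight, diagTensorPlus] <;> ring

lemma outerΨt_eq :
    outerΨt = Matrix.vecMulVec (diagTensorPlus (√(8 + 3 * √7) / 4) (√(8 - 3 * √7) / 4) (1 / √2))
      (star (diagTensorPlus (√(8 + 3 * √7) / 4) (√(8 - 3 * √7) / 4) (1 / √2))) :=
  rfl

lemma Qmap_outerΨt :
    Qmap outerΨt = !![((10 + 15 / 8 * √7 : ℝ) : ℂ), ((25 / 8 : ℝ) : ℂ);
      ((25 / 8 : ℝ) : ℂ), ((10 - 15 / 8 * √7 : ℝ) : ℂ)] := by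
  have h7 : √7 ^ 2 = 7 := Real.sq_sqrt (by norm_num)
  have h7le : 3 * √7 ≤ 8 := by nlinarith [Real.sqrt_nonneg 7]
  have ha : (√(8 + 3 * √7) / 4) ^ 2 = (8 + 3 * √7) / 16 := by
    rw [div_pow, Real.sq_sqrt (by positivity)]; norm_num
  have hb : (√(8 - 3 * √7) / 4) ^ 2 = (8 - 3 * √7) / 16 := by
    rw [div_pow, Real.sq_sqrt (by linarith)]; norm_num
  have hab : √(8 + 3 * √7) / 4 * (√(8 - 3 * √7) / 4) = 1 / 16 := by
    have h : √(8 + 3 * √7) * √(8 - 3 * √7) = 1 := by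
      rw [← Real.sqrt_mul (by positivity), show (8 + 3 * √7) * (8 - 3 * √7) = 1 by nlinarith,
        Real.sqrt_one]
    linear_combination h / 16
  have hc : (1 / √2) ^ 2 = 1 / 2 := by rw [div_pow, Real.sq_sqrt (by norm_num)]; norm_num
  rw [outerΨt_eq, Qmap_vecMulVec_diagTensorPlus, hc, mul_assoc 4, hab, ha, hb]
  ext i j; fin_cases i <;> fin_cases j <;> simp <;> ring

theorem stmt14 :
    ‖Matrix.toEuclideanCLM (𝕜 := ℂ) (Qmap outerΨt)‖ = 10 + (5/4)*Real.sqrt 22 ∧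
    (1/20) * ‖Matrix.toEuclideanCLM (𝕜 := ℂ) (Qmap outerΨt)‖ =
      1/2 + Real.sqrt 22/16 := by
  have hs : √((15 / 8 * √7) ^ 2 + (25 / 8) ^ 2) = 5 / 4 * √22 := by
    rw [mul_pow, Real.sq_sqrt (by norm_num), Real.sqrt_eq_iff_mul_self_eq (by positivity)
      (by positivity), mul_mul_mul_comm, Real.mul_self_sqrt (by norm_num)]
    norm_num
  have hnorm : ‖Matrix.toEuclideanCLM (𝕜 := ℂ) (Qmap outerΨt)‖ = 10 + 5 / 4 * √22 := by
    rw [Matrix.l2_opNorm_toEuclideanCLM, Qmap_outerΨt,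
      Matrix.l2_opNorm_real_symm_fin_two (by norm_num) (by norm_num), hs]
  exact ⟨hnorm, by rw [hnorm]; ring⟩
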